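/- Let At be a finite set of atoms and let K_A and K_B be finite, individually consistent knowledge bases over At. Let x = min { |{a ∈ At : i₁(a) ≠ i₂(a)}| : i₁ ∈ Mod(K_A), i₂ ∈ Mod(K_B) } be the smallest number of atoms on which some pair of models of K_A and K_B differ (this is the value computed by Algorithm 3). Then x ≥ I_c(K_A ∪ K_B), the contension inconsistency value of K_A ∪ K_B. -/
import Mathlib


inductive PropForm (At : Type) : Type where
  | atom : At → PropForm At
  | conj : PropForm At → PropForm At → PropForm At
  | disj : PropForm At → PropForm At → PropForm At
  | neg  : PropForm At → PropForm At
deriving DecidableEq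

inductive Three : Type where
  | zero : Three
  | both : Three
  | one  : Three
deriving DecidableEq

def Three.toNat : Three → ℕ
  | .zero => 0
  | .both => 1
  | .one  => 2

/-- Minimum w.r.t. the truth order 0 ≺ both ≺ 1. -/
def Three.tmin (a b : Three) : Three := if a.toNat ≤ b.toNat then a else b

/-- Maximum w.r.t. the truth order 0 ≺ both ≺ 1. -/
def Three.tmax (a b : Three) : Three := if a.toNat ≤ b.toNat then b else a

def Three.tneg : Three → Three
  | .zero => .one
  | .both => .both
  | .one  => .zero

/-- Three-valued evaluation of a formula. -/
def evalThree {At : Type} (ν : At → Three) : PropForm At → Three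
  | .atom a => ν a
  | .conj α β => Three.tmin (evalThree ν α) (evalThree ν β)
  | .disj α β => Three.tmax (evalThree ν α) (evalThree ν β)
  | .neg α => Three.tneg (evalThree ν α)

/-- Three-valued satisfaction: ν ⊨³ φ iff ν(φ) = 1 or ν(φ) = both. -/
def satThree {At : Type} (ν : At → Three) (φ : PropForm At) : Prop :=
  evalThree ν φ = Three.one ∨ evalThree ν φ = Three.both

/-- Two-valued evaluation of a formula. -/
def evalTwo {At : Type} (ω : At → Bool) : PropForm At → Bool
  | .atom a => ω a
  | .conj α β => evalTwo ω α && evalTwo ω β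
  | .disj α β => evalTwo ω α || evalTwo ω β
  | .neg α => ! evalTwo ω α

/-- Two-valued satisfaction. -/
def satTwo {At : Type} (ω : At → Bool) (φ : PropForm At) : Prop :=
  evalTwo ω φ = true

/-- View a two-valued truth value as a three-valued one. -/
def Bool.toThree : Bool → Three
  | false => Three.zero
  | true  => Three.one


instance : Fintype Three :=
  ⟨{Three.zero, Three.both, Three.one}, fun x => by cases x <;> simp⟩

lemma cover_min : ∀ (x y : Three) (a b : Bool), (x = Three.both ∨ x = a.toThree) →
    (y = Three.both ∨ y = b.toThree) →
    (Three.tmin x y = Three.both ∨ Three.tmin x y = (a && b).toThree) := by decide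

lemma cover_max : ∀ (x y : Three) (a b : Bool), (x = Three.both ∨ x = a.toThree) →
    (y = Three.both ∨ y = b.toThree) →
    (Three.tmax x y = Three.both ∨ Three.tmax x y = (a || b).toThree) := by decide

lemma cover_neg : ∀ (x : Three) (a : Bool), (x = Three.both ∨ x = a.toThree) →
    (Three.tneg x = Three.both ∨ Three.tneg x = (!a).toThree) := by decide

lemma cover_eval {At : Type} (ω : At → Bool) (ν : At → Three)
    (h : ∀ a, ν a = Three.both ∨ ν a = (ω a).toThree) (φ : PropForm At) :
    evalThree ν φ = Three.both ∨ evalThree ν φ = (evalTwo ω φ).toThree := by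
  induction φ with
  | atom a => exact h a
  | conj α β ihα ihβ => exact cover_min _ _ _ _ ihα ihβ
  | disj α β ihα ihβ => exact cover_max _ _ _ _ ihα ihβ
  | neg α ihα => exact cover_neg _ _ ihα

lemma cover_sat {At : Type} (ω : At → Bool) (ν : At → Three)
    (h : ∀ a, ν a = Three.both ∨ ν a = (ω a).toThree) (φ : PropForm At)
    (hs : satTwo ω φ) : satThree ν φ := by
  rcases cover_eval ω ν h φ with h1 | h1
  · exact Or.inr h1
  · left; rw [h1, hs]; rfl

/-- The smallest number of atoms on which some pair of models of `K_A` and `K_B` differ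
is an upper bound for the contension inconsistency value of `K_A ∪ K_B`. -/
theorem stmt3 {At : Type} [Fintype At] [DecidableEq At]
    (KA KB : Finset (PropForm At))
    (hA : ∃ ω : At → Bool, ∀ φ ∈ KA, satTwo ω φ)
    (hB : ∃ ω : At → Bool, ∀ φ ∈ KB, satTwo ω φ) :
    sInf {n : ℕ | ∃ i₁ i₂ : At → Bool, (∀ φ ∈ KA, satTwo i₁ φ) ∧ (∀ φ ∈ KB, satTwo i₂ φ) ∧
        n = (Finset.univ.filter fun a => i₁ a ≠ i₂ a).card}
      ≥
    sInf {n : ℕ | ∃ ν : At → Three, (∀ φ ∈ KA ∪ KB, satThree ν φ) ∧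
        n = (Finset.univ.filter fun a => ν a = Three.both).card} := by
  rcases hA with ⟨ωA, hωA⟩
  rcases hB with ⟨ωB, hωB⟩
  have hne : {n : ℕ | ∃ i₁ i₂ : At → Bool, (∀ φ ∈ KA, satTwo i₁ φ) ∧ (∀ φ ∈ KB, satTwo i₂ φ) ∧
      n = (Finset.univ.filter fun a => i₁ a ≠ i₂ a).card}.Nonempty :=
    ⟨_, ωA, ωB, hωA, hωB, rfl⟩
  obtain ⟨i₁, i₂, h1, h2, hcard⟩ := Nat.sInf_mem hne
  set ν : At → Three := fun a => if i₁ a = i₂ a then (i₁ a).toThree else Three.both with hν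
  have hc1 : ∀ a, ν a = Three.both ∨ ν a = (i₁ a).toThree := by
    intro a; simp only [hν]; split <;> simp
  have hc2 : ∀ a, ν a = Three.both ∨ ν a = (i₂ a).toThree := by
    intro a; simp only [hν]; split
    · right; rename_i h; rw [h]
    · left; rfl
  have hsat : ∀ φ ∈ KA ∪ KB, satThree ν φ := by
    intro φ hφ
    rcases Finset.mem_union.mp hφ with hφ | hφ
    · exact cover_sat i₁ ν hc1 φ (h1 φ hφ)
    · exact cover_sat i₂ ν hc2 φ (h2 φ hφ)
  have hcards : (Finset.univ.filter fun a => ν a = Three.both).card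
      = (Finset.univ.filter fun a => i₁ a ≠ i₂ a).card := by
    congr 1
    apply Finset.filter_congr
    intro a _
    simp only [hν]
    constructor
    · intro h heq; rw [if_pos heq] at h; revert h; cases (i₁ a) <;> decide
    · intro h; rw [if_neg h]
  calc sInf {n : ℕ | ∃ ν : At → Three, (∀ φ ∈ KA ∪ KB, satThree ν φ) ∧
        n = (Finset.univ.filter fun a => ν a = Three.both).card}
      ≤ (Finset.univ.filter fun a => ν a = Three.both).card :=
        Nat.sInf_le ⟨ν, hsat, rfl⟩
    _ = _ := by rw [hcards, ← hcard]
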